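/- arXiv:math/0404509 — 2 statements merged into one kernel-verified Lean document; each statement's English description precedes it below -/
import Mathlib

section
/- Let N ⊂ M be an inclusion of unital C*-algebras (factors) with canonical endomorphism γ : M → M, and isometries v ∈ Hom(id, γ), w ∈ Hom(γ, γ²) satisfying v*w = w*γ(v) = λ^{-1/2}·1, w*γ(w) = ww*, and γ(w)w = w². Define E(x) = w*γ(x)w for x ∈ M. Then E is idempotent on M: E(E(x)) = E(x) for all x ∈ M, and E(1) = 1. -/
/-- From the Longo relations for the canonical endomorphism `γ` and the isometries
`v ∈ Hom(id,γ)`, `w ∈ Hom(γ,γ²)` (`v*w = w*γ(v) = λ^{-1/2}`, `w*γ(w) = ww*`,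
`γ(w)w = w²`), the map `E(x) = w* γ(x) w` satisfies `E ∘ E = E` and `E(1) = 1`. -/
theorem stmt_14 {M : Type*} [Ring M] [StarRing M] [Algebra ℝ M]
    (γ : M →+* M) (hγstar : ∀ x, γ (star x) = star (γ x))
    (v w : M) (lam : ℝ) (hlam : 0 < lam)
    (hv_iso : star v * v = 1) (hw_iso : star w * w = 1)
    (hv : ∀ x : M, v * x = γ x * v)
    (hw : ∀ x : M, w * γ x = γ (γ x) * w)
    (hvw : star v * w = (Real.sqrt lam)⁻¹ • (1 : M))
    (hwγv : star w * γ v = (Real.sqrt lam)⁻¹ • (1 : M))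
    (hwγw : star w * γ w = w * star w)
    (hγww : γ w * w = w * w)
    (E : M → M) (hE : ∀ x, E x = star w * γ x * w) :
    (∀ x, E (E x) = E x) ∧ E 1 = 1 := by
  have hkey : γ (star w) * w = w * star w := by
    have := congrArg star hwγw
    simpa [star_mul, hγstar] using this
  constructor
  · intro x
    rw [hE, hE]
    have h1 : γ (star w * γ x * w) = γ (star w) * γ (γ x) * γ w := by
      simp [map_mul]
    rw [h1]
    calc star w * (γ (star w) * γ (γ x) * γ w) * w
        = star w * γ (star w) * γ (γ x) * (γ w * w) := by noncomm_ring
      _ = star w * γ (star w) * γ (γ x) * (w * w) := by rw [hγww]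
      _ = star w * γ (star w) * ((γ (γ x) * w) * w) := by noncomm_ring
      _ = star w * γ (star w) * ((w * γ x) * w) := by rw [← hw]
      _ = star w * (γ (star w) * w) * (γ x * w) := by noncomm_ring
      _ = star w * (w * star w) * (γ x * w) := by rw [hkey]
      _ = (star w * w) * (star w * γ x * w) := by noncomm_ring
      _ = star w * γ x * w := by rw [hw_iso, one_mul]
  · rw [hE]; simp [hw_iso]
end

section
/- Let A be a unital C*-algebra, σ₁, σ₂ unital *-endomorphisms of A, and suppose {ψ_i}_{i=1}^{n} and {φ_j}_{j=1}^{m} are families of isometries in A with ψ_i x = σ₁(x) ψ_i and φ_j x = σ₂(x) φ_j for all x ∈ A, satisfying Σᵢ ψᵢψᵢ* = 1 and Σⱼ φⱼφⱼ* = 1. Then u := Σ_{i,j} φ_j ψ_i φ_j* ψ_i* satisfies u σ₁(σ₂(x)) = σ₂(σ₁(x)) u for all x ∈ A; i.e., u ∈ Hom(σ₁∘σ₂, σ₂∘σ₁). Moreover u is unitary. -/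
open scoped BigOperators

private lemma dr_aux {A : Type*} [Ring A] [StarRing A]
    (n m : ℕ) (ψ : Fin n → A) (φ : Fin m → A)
    (hψortho : ∀ i j, star (ψ i) * ψ j = if i = j then 1 else 0)
    (hφortho : ∀ i j, star (φ i) * φ j = if i = j then 1 else 0)
    (hψsum : ∑ i, ψ i * star (ψ i) = 1)
    (hφsum : ∑ j, φ j * star (φ j) = 1)
    (u : A) (hu : u = ∑ i, ∑ j, φ j * ψ i * star (φ j) * star (ψ i)) :
    star u * u = 1 := by
  have hus : star u = ∑ i, ∑ j, ψ i * (φ j * (star (ψ i) * star (φ j))) := by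
    rw [hu]; simp [star_mul, mul_assoc]
  have key1 : ∀ l, star u * φ l = ∑ i, ψ i * (φ l * star (ψ i)) := by
    intro l
    rw [hus, Finset.sum_mul]
    refine Finset.sum_congr rfl fun i _ => ?_
    rw [Finset.sum_mul]
    have : ∀ j, ψ i * (φ j * (star (ψ i) * star (φ j))) * φ l
        = if j = l then ψ i * (φ j * star (ψ i)) else 0 := by
      intro j
      simp only [mul_assoc, hφortho j l]
      split <;> simp
    simp only [this, Finset.sum_ite_eq']
    simp
  calc star u * u = ∑ k, ∑ l, star u * φ l * (ψ k * (star (φ l) * star (ψ k))) := by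
        rw [hu, Finset.mul_sum]
        refine Finset.sum_congr rfl fun k _ => ?_
        rw [Finset.mul_sum]
        refine Finset.sum_congr rfl fun l _ => ?_
        simp [mul_assoc]
    _ = ∑ k, ∑ l, ∑ i, ψ i * (φ l * star (ψ i)) * (ψ k * (star (φ l) * star (ψ k))) := by
        simp only [key1, Finset.sum_mul]
    _ = ∑ k, ∑ l, ψ k * (φ l * (star (φ l) * star (ψ k))) := by
        refine Finset.sum_congr rfl fun k _ => ?_
        refine Finset.sum_congr rfl fun l _ => ?_
        have : ∀ i, ψ i * (φ l * star (ψ i)) * (ψ k * (star (φ l) * star (ψ k)))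
            = if i = k then ψ i * (φ l * (star (φ l) * star (ψ i))) else 0 := by
          intro i
          have h1 : star (ψ i) * (ψ k * (star (φ l) * star (ψ k)))
              = (if i = k then 1 else 0) * (star (φ l) * star (ψ k)) := by
            rw [← mul_assoc, hψortho]
          simp only [mul_assoc, h1]
          by_cases hik : i = k
          · subst hik; simp
          · simp [hik]
        simp only [this, Finset.sum_ite_eq']
        simp
    _ = 1 := by
        have : ∀ k, ∑ l, ψ k * (φ l * (star (φ l) * star (ψ k)))
            = ψ k * star (ψ k) := by
          intro k
          calc ∑ l, ψ k * (φ l * (star (φ l) * star (ψ k)))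
              = ψ k * ((∑ l, φ l * star (φ l)) * star (ψ k)) := by
                rw [Finset.sum_mul, Finset.mul_sum]; simp [mul_assoc]
            _ = ψ k * star (ψ k) := by rw [hφsum, one_mul]
        simp only [this, hψsum]

/-- The Doplicher–Roberts symmetry: for Cuntz families of isometries `{ψ_i}`, `{φ_j}`
implementing unital endomorphisms `σ₁, σ₂` of a unital C*-algebra (star ring) `A`,
`u = Σ_{i,j} φ_j ψ_i φ_j* ψ_i*` is a unitary intertwiner in `Hom(σ₁∘σ₂, σ₂∘σ₁)`. -/
theorem stmt_17 {A : Type*} [Ring A] [StarRing A]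
    (σ₁ σ₂ : A →+* A)
    (n m : ℕ) (ψ : Fin n → A) (φ : Fin m → A)
    (hψortho : ∀ i j, star (ψ i) * ψ j = if i = j then 1 else 0)
    (hφortho : ∀ i j, star (φ i) * φ j = if i = j then 1 else 0)
    (hψsum : ∑ i, ψ i * star (ψ i) = 1)
    (hφsum : ∑ j, φ j * star (φ j) = 1)
    (hψcov : ∀ (i) (x : A), ψ i * x = σ₁ x * ψ i)
    (hφcov : ∀ (j) (x : A), φ j * x = σ₂ x * φ j)
    (u : A) (hu : u = ∑ i, ∑ j, φ j * ψ i * star (φ j) * star (ψ i)) :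
    (∀ x : A, u * σ₁ (σ₂ x) = σ₂ (σ₁ x) * u) ∧ star u * u = 1 ∧ u * star u = 1 := by
  have cov1 : ∀ i (y : A), star (ψ i) * σ₁ y = y * star (ψ i) := by
    intro i y
    have h : star (ψ i) * σ₁ y = ∑ k, star (ψ i) * ψ k * (y * star (ψ k)) := by
      calc star (ψ i) * σ₁ y = star (ψ i) * σ₁ y * ∑ k, ψ k * star (ψ k) := by
            rw [hψsum, mul_one]
        _ = ∑ k, star (ψ i) * (σ₁ y * ψ k) * star (ψ k) := by
            rw [Finset.mul_sum]; simp [mul_assoc]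
        _ = ∑ k, star (ψ i) * ψ k * (y * star (ψ k)) := by
            simp [← hψcov, mul_assoc]
    rw [h]
    simp [hψortho, ite_mul, Finset.sum_ite_eq]
  have cov2 : ∀ j (y : A), star (φ j) * σ₂ y = y * star (φ j) := by
    intro j y
    have h : star (φ j) * σ₂ y = ∑ k, star (φ j) * φ k * (y * star (φ k)) := by
      calc star (φ j) * σ₂ y = star (φ j) * σ₂ y * ∑ k, φ k * star (φ k) := by
            rw [hφsum, mul_one]
        _ = ∑ k, star (φ j) * (σ₂ y * φ k) * star (φ k) := by
            rw [Finset.mul_sum]; simp [mul_assoc]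
        _ = ∑ k, star (φ j) * φ k * (y * star (φ k)) := by
            simp [← hφcov, mul_assoc]
    rw [h]
    simp [hφortho, ite_mul, Finset.sum_ite_eq]
  refine ⟨?_, dr_aux n m ψ φ hψortho hφortho hψsum hφsum u hu, ?_⟩
  · intro x
    rw [hu, Finset.sum_mul, Finset.mul_sum]
    refine Finset.sum_congr rfl fun i _ => ?_
    rw [Finset.sum_mul, Finset.mul_sum]
    refine Finset.sum_congr rfl fun j _ => ?_
    calc φ j * ψ i * star (φ j) * star (ψ i) * σ₁ (σ₂ x)
        = φ j * ψ i * (star (φ j) * (star (ψ i) * σ₁ (σ₂ x))) := by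
          simp [mul_assoc]
      _ = φ j * ψ i * (star (φ j) * (σ₂ x * star (ψ i))) := by rw [cov1]
      _ = φ j * (ψ i * (x * (star (φ j) * star (ψ i)))) := by
          rw [← mul_assoc (star (φ j)), cov2]; simp [mul_assoc]
      _ = φ j * (σ₁ x * (ψ i * (star (φ j) * star (ψ i)))) := by
          rw [← mul_assoc (ψ i), hψcov, mul_assoc]
      _ = σ₂ (σ₁ x) * (φ j * ψ i * star (φ j) * star (ψ i)) := by
          rw [← mul_assoc (φ j), hφcov]; simp [mul_assoc]
  · have hus : star u = ∑ i : Fin m, ∑ j : Fin n, ψ j * φ i * star (ψ j) * star (φ i) := by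
      rw [hu]
      rw [Finset.sum_comm]
      simp [star_mul, mul_assoc]
    have := dr_aux m n φ ψ hφortho hψortho hφsum hψsum (star u) hus
    rwa [star_star] at this
end
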